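/- arXiv:1609.03838 — 2 statements merged into one kernel-verified Lean document; each statement's English description precedes it below -/
import Mathlib

section
/- Every prime ideal P of the semiring R̄[x] of univariate tropical polynomials that is also a tropical ideal and is neither {∞} nor the unit ideal is equal to J_a for some a ∈ ℝ ∪ {∞}, where J_a is the set of tropical polynomials f with a ∈ V(f). -/
open Polynomial

/-- The tropical semiring `ℝ ∪ {∞}` with `⊕ = min` and `⊙ = +`. -/
abbrev TropR : Type := Tropical (WithTop ℝ)

/-- The value of the `i`-th term `bᵢ ⊙ aⁱ` of the tropical polynomial `f` at `a`. -/
noncomputable def trmVal (f : Polynomial TropR) (a : WithTop ℝ) (i : ℕ) : TropR :=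
  f.coeff i * Tropical.trop a ^ i

/-- The tropical variety `V(f) ⊆ ℝ ∪ {∞}` of a univariate tropical polynomial:
the points `a` with `f(a) = ∞` or where the minimum defining `f(a)` is attained by at
least two terms. -/
noncomputable def tropVa (f : Polynomial TropR) : Set (WithTop ℝ) :=
  {a | f.eval (Tropical.trop a) = 0 ∨
    ∃ i j : ℕ, i ≠ j ∧ trmVal f a i = f.eval (Tropical.trop a) ∧
      trmVal f a j = f.eval (Tropical.trop a)}

/-- `I` is a tropical ideal of `R̄[x]`: the polynomials of `I` supported on any finite
set of monomials form the vectors of a valuated matroid; equivalently `I` satisfies the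
vector (monomial) elimination axiom. -/
def IsTropicalIdealUV (I : Ideal (Polynomial TropR)) : Prop :=
  ∀ f ∈ I, ∀ g ∈ I, ∀ i : ℕ, f.coeff i = g.coeff i → f.coeff i ≠ 0 →
    ∃ h ∈ I, h.coeff i = 0 ∧
      (∀ j, f.coeff j + g.coeff j ≤ h.coeff j) ∧
      ∀ j, f.coeff j ≠ g.coeff j → h.coeff j = f.coeff j + g.coeff j

/-!
If every element of `P` has constant term `∞`, write a nonzero one as `xⁿ ⊙ g` with finite
constant term: primality puts `x` in `P`, and then `P = J_∞`. Otherwise take `f = f₀ ⊕ x ⊙ g ∈ P` with `f₀ ≠ ∞` and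
choose `t` at which `f₀` ties with the minimum of the terms of `x ⊙ g`. Since tropically all
binomial coefficients of `(x ⊕ t)ⁿ` are trivial, the tie gives
`(x ⊕ t)ᵈ ⊙ f = (x ⊕ t)ᵈ ⊙ f(x ⊕ t) = (x ⊕ t)ᵈ⁺¹ ⊙ g(x ⊕ t)` for `d = deg f`. By primality
`x ⊕ t ∈ P`, or `g(x ⊕ t) ∈ P` has smaller degree and finite constant term; descending, some
`x ⊕ t` lies in `P`.

Elimination against `x ⊕ t` puts every binomial `xᵐ ⊕ tᵐ` in `P`. Eliminating the terms of a
polynomial one at a time with such binomials shows that it lies in `P` when its minimum at `t` is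
attained twice; when the minimum is attained once, the same elimination would leave a monomial in
`P`, hence `x`, and eliminating `x` from `x ⊕ t` leaves the unit `t`.
-/

open Tropical

namespace Tropical

instance {G : Type*} [AddCommGroup G] [LinearOrder G] [IsOrderedAddMonoid G] :
    CommGroupWithZero (Tropical (WithTop G)) where
  inv_zero := untrop_injective (by simp [untrop_inv])
  mul_inv_cancel x hx := untrop_injective <| by
    rw [untrop_mul, untrop_inv, untrop_one]
    exact LinearOrderedAddCommGroupWithTop.add_neg_cancel_of_ne_top
      (by simpa [← untrop_inj_iff] using hx)
  div_eq_mul_inv x y := untrop_injective <| by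
    rw [untrop_div, untrop_mul, untrop_inv, sub_eq_add_neg]

variable {R : Type*} [LinearOrderedAddCommMonoidWithTop R]

theorem natCast_eq_one {n : ℕ} (hn : n ≠ 0) : (n : Tropical R) = 1 := if_neg hn

theorem sum_eq_inf {ι : Type*} (s : Finset ι) (f : ι → Tropical R) :
    ∑ i ∈ s, f i = s.inf f := by
  induction s using Finset.cons_induction with
  | empty => rfl
  | cons i s hi ih => rw [Finset.sum_cons, Finset.inf_cons, ih, min_eq_add]

theorem eval_le_coeff_mul_pow (f : (Tropical R)[X]) (t : Tropical R) (i : ℕ) :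
    f.eval t ≤ f.coeff i * t ^ i := by
  rcases le_or_gt i f.natDegree with hi | hi
  · rw [eval_eq_sum_range, sum_eq_inf]
    exact Finset.inf_le (Finset.mem_range.mpr (Nat.lt_succ_of_le hi))
  · rw [coeff_eq_zero_of_natDegree_lt hi, zero_mul]
    exact le_zero _

theorem exists_coeff_mul_pow_eq_eval (f : (Tropical R)[X]) (t : Tropical R) :
    ∃ i, f.coeff i * t ^ i = f.eval t := by
  obtain ⟨i, -, hi⟩ := Finset.exists_mem_eq_inf (Finset.range (f.natDegree + 1))
    Finset.nonempty_range_add_one fun i => f.coeff i * t ^ i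
  exact ⟨i, by rw [eval_eq_sum_range, sum_eq_inf, hi]⟩

theorem polynomial_add_self (p : (Tropical R)[X]) : p + p = p := by
  ext n
  rw [coeff_add, add_self]

theorem add_C_coeff_zero (f : (Tropical R)[X]) : f + C (f.coeff 0) = f := by
  ext n
  rcases eq_or_ne n 0 with rfl | hn
  · rw [coeff_add, coeff_C_zero, add_self]
  · rw [coeff_add, coeff_C_of_ne_zero hn, add_zero]

theorem coeff_X_add_C_pow (t : Tropical R) (n k : ℕ) :
    ((X + C t) ^ n).coeff k = if k ≤ n then t ^ (n - k) else 0 := by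
  rw [Polynomial.coeff_X_add_C_pow]
  split_ifs with hk
  · rw [natCast_eq_one (Nat.choose_pos hk).ne', mul_one]
  · rw [Nat.choose_eq_zero_of_lt (not_le.mp hk), Nat.cast_zero, mul_zero]

theorem X_pow_add_C_pow_mul_X_add_C_pow (t : Tropical R) {i d : ℕ} (hi : i ≤ d + 1) :
    (X ^ i + C (t ^ i)) * (X + C t) ^ d = (X + C t) ^ (d + i) := by
  ext m
  rw [add_mul, coeff_add, coeff_X_pow_mul', coeff_C_mul, coeff_X_add_C_pow,
    coeff_X_add_C_pow, coeff_X_add_C_pow]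
  by_cases him : i ≤ m <;> by_cases hmd : m ≤ d <;> simp only [him, hmd, if_true, if_false]
  · rw [if_pos (by omega), if_pos (by omega), ← pow_add, (by omega : i + (d - m) = d - (m - i)),
      (by omega : d + i - m = d - (m - i)), add_self]
  · rw [mul_zero, add_zero]
    split_ifs <;> first | omega | (congr 1; omega) | rfl
  · rw [if_pos (by omega), zero_add, ← pow_add]; congr 1; omega
  · omega

theorem X_add_C_pow_mul_comp (t : Tropical R) {f : (Tropical R)[X]} {d : ℕ}
    (hd : f.natDegree ≤ d + 1) (hf : f.eval t = f.coeff 0) :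
    (X + C t) ^ d * f.comp (X + C t) = (X + C t) ^ d * f := by
  have hsum : f + C (f.eval t) =
      ∑ i ∈ Finset.range (f.natDegree + 1), C (f.coeff i) * (X ^ i + C (t ^ i)) := by
    rw [eval_eq_sum_range, map_sum]
    nth_rw 1 [f.as_sum_range_C_mul_X_pow]
    simp only [← Finset.sum_add_distrib, mul_add, C_mul]
  calc (X + C t) ^ d * f.comp (X + C t)
      = ∑ i ∈ Finset.range (f.natDegree + 1), C (f.coeff i) * (X + C t) ^ (d + i) := by
        rw [comp, eval₂_eq_sum_range, Finset.mul_sum]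
        exact Finset.sum_congr rfl fun i _ => by ring
    _ = (X + C t) ^ d * (f + C (f.eval t)) := by
        rw [hsum, Finset.mul_sum]
        refine Finset.sum_congr rfl fun i hi => ?_
        have hi : i ≤ d + 1 := (Nat.lt_succ_iff.mp (Finset.mem_range.mp hi)).trans hd
        rw [mul_comm ((X + C t) ^ d), mul_assoc, X_pow_add_C_pow_mul_X_add_C_pow t hi]
    _ = (X + C t) ^ d * f := by rw [hf, add_C_coeff_zero]

theorem comp_X_add_C_eq_mul (t : Tropical R) {f : (Tropical R)[X]}
    (h : f.divX.eval t * t = f.coeff 0) :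
    f.comp (X + C t) = f.divX.comp (X + C t) * (X + C t) := by
  have h0 : (f.divX.comp (X + C t) * (X + C t)).coeff 0 = f.coeff 0 := by
    simp [coeff_zero_eq_eval_zero, eval_comp, h]
  conv_lhs => rw [← divX_mul_X_add f]
  rw [add_comp, mul_comp, X_comp, C_comp, ← h0, add_C_coeff_zero]

theorem X_add_C_pow_mul_eq (t : Tropical R) {f : (Tropical R)[X]}
    (h : f.divX.eval t * t = f.coeff 0) :
    (X + C t) ^ f.natDegree * f = (X + C t) ^ (f.natDegree + 1) * f.divX.comp (X + C t) := by
  have heval : f.eval t = f.coeff 0 := by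
    conv_lhs => rw [← divX_mul_X_add f]
    rw [eval_add, eval_mul, eval_X, eval_C, h, add_self]
  rw [← X_add_C_pow_mul_comp t (Nat.le_succ _) heval, comp_X_add_C_eq_mul t h, pow_succ,
    mul_assoc, mul_comm (f.divX.comp _)]

end Tropical

theorem trop_coe_mul_trop_coe_pow (x a : ℝ) (n : ℕ) :
    trop (x : WithTop ℝ) * trop (a : WithTop ℝ) ^ n = trop ((x + n * a : ℝ) : WithTop ℝ) := by
  rw [← trop_nsmul, ← trop_add, ← WithTop.coe_nsmul, nsmul_eq_mul, WithTop.coe_add]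

theorem exists_trop_coe_eq {x : TropR} (hx : x ≠ 0) : ∃ r : ℝ, trop (r : WithTop ℝ) = x := by
  have : untrop x ≠ ⊤ := fun h => hx (by rw [← trop_untrop x, h, trop_top])
  obtain ⟨r, hr⟩ := WithTop.ne_top_iff_exists.mp this
  exact ⟨r, by rw [hr, trop_untrop]⟩

theorem exists_eval_mul_eq {g : TropR[X]} (hg : g ≠ 0) {c : TropR} (hc : c ≠ 0) :
    ∃ t : TropR, t ≠ 0 ∧ g.eval t * t = c := by
  obtain ⟨c₀, rfl⟩ := exists_trop_coe_eq hc
  choose! r hr using fun i (hi : i ∈ g.support) => exists_trop_coe_eq (mem_support_iff.mp hi)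
  have hne : g.support.Nonempty := support_nonempty.mpr hg
  obtain ⟨k, hk, hka⟩ := Finset.exists_mem_eq_sup' hne fun i => (c₀ - r i) / (i + 1)
  set a := g.support.sup' hne fun i => (c₀ - r i) / (i + 1)
  have hterm : ∀ i ∈ g.support, g.coeff i * trop (a : WithTop ℝ) ^ (i + 1) =
      trop ((r i + (i + 1 : ℕ) * a : ℝ) : WithTop ℝ) := fun i hi => by
    rw [← hr i hi, trop_coe_mul_trop_coe_pow]
  have hle : ∀ i ∈ g.support, c₀ ≤ r i + (i + 1 : ℕ) * a := fun i hi => by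
    have := Finset.le_sup' (fun i => (c₀ - r i) / (i + 1)) hi
    rw [div_le_iff₀ (by positivity)] at this
    push_cast; linarith
  refine ⟨trop (a : WithTop ℝ), trop_coe_ne_zero a, ?_⟩
  rw [eval_eq_sum, sum_def, Finset.sum_mul, Tropical.sum_eq_inf]
  simp only [mul_assoc, ← pow_succ]
  refine le_antisymm ?_ (Finset.le_inf fun i hi => ?_)
  · refine (Finset.inf_le hk).trans_eq ?_
    rw [hterm k hk, hka]
    congr 2
    push_cast
    field_simp
    ring
  · rw [hterm i hi]
    exact WithTop.coe_le_coe.mpr (hle i hi)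

theorem Polynomial.induction_on_erase {R : Type*} [Semiring R] (K : Finset ℕ) {M : R[X] → Prop}
    (base : ∀ f, f.support ⊆ K → M f)
    (step : ∀ f j, j ∈ f.support → j ∉ K → M (f.erase j) → M f) (f : R[X]) : M f := by
  induction hn : (f.support \ K).card generalizing f with
  | zero => exact base f (Finset.sdiff_eq_empty_iff_subset.mp (Finset.card_eq_zero.mp hn))
  | succ n ih =>
    obtain ⟨j, hj⟩ := Finset.card_pos.mp (by rw [hn]; exact n.succ_pos)
    obtain ⟨hjf, hjK⟩ := Finset.mem_sdiff.mp hj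
    refine step f j hjf hjK (ih _ ?_)
    rw [support_erase, Finset.erase_sdiff_comm, Finset.card_erase_of_mem hj, hn,
      Nat.add_sub_cancel]

theorem IsTropicalIdealUV.erase_add_mem {P : Ideal TropR[X]} (hP : IsTropicalIdealUV P)
    {f g : TropR[X]} (hf : f ∈ P) (hg : g ∈ P) {i : ℕ} (hi : f.coeff i = g.coeff i)
    (h0 : f.coeff i ≠ 0) (hside : ∀ l ≠ i, f.coeff l = g.coeff l → g.coeff l = 0) :
    (f + g).erase i ∈ P := by
  obtain ⟨h, hh, hhi, hle, hne⟩ := hP f hf g hg i hi h0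
  convert hh using 1
  ext l
  rw [coeff_erase, coeff_add]
  split_ifs with hli
  · rw [hli, hhi]
  · by_cases hfg : f.coeff l = g.coeff l
    · have hle := hle l
      rw [hfg, hside l hli hfg, add_zero] at hle ⊢
      exact le_antisymm hle (le_zero _)
    · exact (hne l hfg).symm

section LinearFactor

variable {P : Ideal TropR[X]} {t : TropR}

theorem X_pow_add_C_pow_mem (hP : IsTropicalIdealUV P) (ht : t ≠ 0) (hlin : X + C t ∈ P)
    {m : ℕ} (hm : m ≠ 0) : X ^ m + C (t ^ m) ∈ P := by
  induction m with
  | zero => exact absurd rfl hm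
  | succ m ih =>
    rcases eq_or_ne m 0 with rfl | hm
    · simpa using hlin
    have h₁ : X * (X ^ m + C (t ^ m)) = X ^ (m + 1) + C (t ^ m) * X ^ 1 := by ring
    have h₂ : C (t ^ m) * (X + C t) = C (t ^ m) * X ^ 1 + C (t ^ (m + 1)) * X ^ 0 := by
      simp only [pow_succ, C_mul]; ring
    have h := hP.erase_add_mem (h₁ ▸ P.mul_mem_left X (ih hm)) (h₂ ▸ P.mul_mem_left _ hlin)
      (i := 1) (by simp [coeff_X_pow, hm, -map_pow]) (by simp [coeff_X_pow, hm, ht, -map_pow])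
      (fun l hl h => by
        rcases eq_or_ne l 0 with rfl | hl0
        · simp [coeff_X_pow, -map_pow] at h
          exact absurd h.symm (pow_ne_zero _ ht)
        · simp only [coeff_add, coeff_C_mul, coeff_X_pow, if_neg hl, if_neg hl0, mul_zero,
            add_zero])
    convert h using 1
    ext l
    simp only [coeff_erase, coeff_add, coeff_C_mul, coeff_X_pow, coeff_C]
    split_ifs <;> simp_all [-map_pow]

theorem C_mul_X_pow_add_C_mul_X_pow_mem (hP : IsTropicalIdealUV P) (ht : t ≠ 0)
    (hlin : X + C t ∈ P) {i j : ℕ} (hij : i ≠ j) {c c' : TropR} (h : c * t ^ i = c' * t ^ j) :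
    C c * X ^ i + C c' * X ^ j ∈ P := by
  wlog hlt : i < j generalizing i j c c'
  · rw [add_comm]
    exact this hij.symm h.symm (by omega)
  obtain ⟨k, rfl⟩ := Nat.exists_eq_add_of_lt hlt
  have hc : c = c' * t ^ (k + 1) :=
    mul_right_cancel₀ (pow_ne_zero i ht) (by rw [h, mul_assoc, ← pow_add]; ring_nf)
  have : C c * X ^ i + C c' * X ^ (i + k + 1) =
      C c' * X ^ i * (X ^ (k + 1) + C (t ^ (k + 1))) := by
    rw [hc, C_mul]; ring
  rw [this]
  exact P.mul_mem_left _ (X_pow_add_C_pow_mem hP ht hlin k.succ_ne_zero)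

theorem erase_add_binomial (ht : t ≠ 0) {f : TropR[X]} {j p : ℕ} (hjp : j ≠ p)
    (hle : f.coeff p * t ^ p ≤ f.coeff j * t ^ j) :
    f.erase j + (C (f.coeff j) * X ^ j + C (f.coeff j * t ^ j / t ^ p) * X ^ p) = f := by
  have hp : f.coeff p ≤ f.coeff j * t ^ j / t ^ p := by
    simpa only [← div_eq_mul_inv, mul_div_cancel_right₀ _ (pow_ne_zero p ht)]
      using mul_le_mul_left hle (t ^ p)⁻¹
  ext l
  simp only [coeff_add, coeff_erase, coeff_C_mul, coeff_X_pow, mul_ite, mul_one, mul_zero]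
  split_ifs <;> subst_vars <;> first | omega | simp [add_eq_left hp]

theorem mem_of_erase_mem (hP : IsTropicalIdealUV P) (ht : t ≠ 0) (hlin : X + C t ∈ P)
    {f : TropR[X]} {j p : ℕ} (hjp : j ≠ p) (hle : f.coeff p * t ^ p ≤ f.coeff j * t ^ j)
    (h : f.erase j ∈ P) : f ∈ P := by
  rw [← erase_add_binomial ht hjp hle]
  exact P.add_mem h (C_mul_X_pow_add_C_mul_X_pow_mem hP ht hlin hjp
    (div_mul_cancel₀ _ (pow_ne_zero p ht)).symm)

theorem erase_mem_of_mem (hP : IsTropicalIdealUV P) (ht : t ≠ 0) (hlin : X + C t ∈ P)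
    {f : TropR[X]} {j p : ℕ} (hjp : j ≠ p) (hlt : f.coeff p * t ^ p < f.coeff j * t ^ j)
    (hj : f.coeff j ≠ 0) (h : f ∈ P) : f.erase j ∈ P := by
  set E := C (f.coeff j) * X ^ j + C (f.coeff j * t ^ j / t ^ p) * X ^ p
  have hE : E ∈ P := C_mul_X_pow_add_C_mul_X_pow_mem hP ht hlin hjp
    (div_mul_cancel₀ _ (pow_ne_zero p ht)).symm
  have hcoeff : ∀ l, E.coeff l = (if l = j then f.coeff j else 0) +
      if l = p then f.coeff j * t ^ j / t ^ p else 0 := fun l => by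
    simp only [E, coeff_add, coeff_C_mul, coeff_X_pow, mul_ite, mul_one, mul_zero]
  have hfE : f + E = f := by
    have key : f.erase j + E = f := erase_add_binomial ht hjp hlt.le
    rw [← key, add_assoc, polynomial_add_self, key]
  rw [← hfE]
  refine hP.erase_add_mem h hE (by simp [hcoeff, hjp]) hj fun l hl hfl => ?_
  rw [hcoeff, if_neg hl, zero_add] at hfl ⊢
  split_ifs with hlp
  · subst hlp
    rw [if_pos rfl] at hfl
    rw [hfl, div_mul_cancel₀ _ (pow_ne_zero _ ht)] at hlt
    exact absurd hlt (lt_irrefl _)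
  · rfl

theorem C_mul_X_pow_notMem (hP : IsTropicalIdealUV P) (hPrime : P.IsPrime) (ht : t ≠ 0)
    (hlin : X + C t ∈ P) {c : TropR} (hc : c ≠ 0) (i : ℕ) : C c * X ^ i ∉ P := by
  intro h
  rcases hPrime.mem_or_mem h with hC | hXi
  · exact hPrime.ne_top (P.eq_top_of_isUnit_mem hC (isUnit_C.mpr hc.isUnit))
  have hX : X ∈ P := hPrime.mem_of_pow_mem i hXi
  have hCt : (X + (X + C t)).erase 1 = C t := by
    ext l
    rcases eq_or_ne l 1 with rfl | hl
    · simp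
    · simp [coeff_X, coeff_C, hl, Ne.symm hl]
  have := hP.erase_add_mem hX hlin (i := 1) (by simp) (by simp) fun l hl hXl => by
    simpa [coeff_X, coeff_C, Ne.symm hl, eq_comm (a := (0 : TropR)), ht] using hXl
  rw [hCt] at this
  exact hPrime.ne_top (P.eq_top_of_isUnit_mem this (isUnit_C.mpr ht.isUnit))

theorem mem_of_two_minimizers (hP : IsTropicalIdealUV P) (ht : t ≠ 0) (hlin : X + C t ∈ P)
    {p q : ℕ} (hpq : p ≠ q) (f : TropR[X]) (hmin : ∀ j, f.coeff p * t ^ p ≤ f.coeff j * t ^ j)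
    (htie : f.coeff p * t ^ p = f.coeff q * t ^ q) : f ∈ P := by
  induction f using Polynomial.induction_on_erase {p, q} with
  | base f hf =>
    have : f = C (f.coeff p) * X ^ p + C (f.coeff q) * X ^ q := by
      ext l
      simp only [coeff_add, coeff_C_mul, coeff_X_pow, mul_ite, mul_one, mul_zero]
      split_ifs with hlp hlq hlq <;> subst_vars <;> first | omega | simp
      refine notMem_support_iff.mp fun hl => ?_
      rcases Finset.mem_insert.mp (hf hl) with h | h
      · exact hlp h
      · exact hlq (Finset.mem_singleton.mp h)
    rw [this]
    exact C_mul_X_pow_add_C_mul_X_pow_mem hP ht hlin hpq htie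
  | step f j _ hj ih =>
    obtain ⟨hjp, hjq⟩ : j ≠ p ∧ j ≠ q := by simpa [not_or] using hj
    refine mem_of_erase_mem hP ht hlin hjp (hmin j) (ih (fun l => ?_) ?_)
    · rw [erase_ne f hjp.symm, coeff_erase]
      split_ifs
      · rw [zero_mul]; exact le_zero _
      · exact hmin l
    · rwa [erase_ne f hjp.symm, erase_ne f hjq.symm]

theorem notMem_of_unique_minimizer (hP : IsTropicalIdealUV P) (hPrime : P.IsPrime)
    (ht : t ≠ 0) (hlin : X + C t ∈ P) {i : ℕ} (f : TropR[X]) (hi : f.coeff i ≠ 0)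
    (hmin : ∀ j ≠ i, f.coeff i * t ^ i < f.coeff j * t ^ j) : f ∉ P := by
  induction f using Polynomial.induction_on_erase {i} with
  | base f hf =>
    have : f = C (f.coeff i) * X ^ i := by
      ext l
      rw [coeff_C_mul_X_pow]
      split_ifs with hl
      · rw [hl]
      · exact notMem_support_iff.mp fun h => hl (Finset.mem_singleton.mp (hf h))
    rw [this]
    exact C_mul_X_pow_notMem hP hPrime ht hlin hi i
  | step f j hjf hj ih =>
    have hji : j ≠ i := by simpa using hj
    refine fun hf => ih (by rwa [erase_ne f hji.symm]) (fun l hl => ?_)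
      (erase_mem_of_mem hP ht hlin hji (hmin j hji) (mem_support_iff.mp hjf) hf)
    rw [erase_ne f hji.symm, coeff_erase]
    split_ifs
    · rw [zero_mul]
      exact lt_of_le_of_ne (le_zero _) (mul_ne_zero hi (pow_ne_zero i ht))
    · exact hmin l hl

theorem mem_iff_untrop_mem_tropVa (hP : IsTropicalIdealUV P) (hPrime : P.IsPrime) (ht : t ≠ 0)
    (hlin : X + C t ∈ P) (f : TropR[X]) : f ∈ P ↔ untrop t ∈ tropVa f := by
  change _ ↔ f.eval t = 0 ∨
    ∃ i j, i ≠ j ∧ f.coeff i * t ^ i = f.eval t ∧ f.coeff j * t ^ j = f.eval t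
  constructor
  · intro hf
    by_contra! h
    obtain ⟨i, hi⟩ := exists_coeff_mul_pow_eq_eval f t
    refine notMem_of_unique_minimizer hP hPrime ht hlin f (left_ne_zero_of_mul (hi ▸ h.1))
      (fun j hj => lt_of_le_of_ne (hi ▸ eval_le_coeff_mul_pow f t j) fun hij => ?_) hf
    exact h.2 i j hj.symm hi (hij ▸ hi)
  · rintro (h0 | ⟨p, q, hpq, hp, hq⟩)
    · have h : ∀ i, f.coeff i * t ^ i = 0 := fun i =>
        le_antisymm (le_zero _) (h0 ▸ eval_le_coeff_mul_pow f t i)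
      exact mem_of_two_minimizers hP ht hlin zero_ne_one f (fun j => by rw [h, h]) (by rw [h, h])
    · exact mem_of_two_minimizers hP ht hlin hpq f (fun j => hp ▸ eval_le_coeff_mul_pow f t j)
        (hp.trans hq.symm)

end LinearFactor

section Prime

variable {P : Ideal TropR[X]}

theorem exists_X_add_C_mem (hPrime : P.IsPrime) {f : TropR[X]} (hf : f ∈ P)
    (h0 : f.coeff 0 ≠ 0) : ∃ t ≠ 0, X + C t ∈ P := by
  induction hd : f.natDegree using Nat.strong_induction_on generalizing f with
  | _ d ih =>
    rcases eq_or_ne d 0 with rfl | hd0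
    · rw [eq_C_of_natDegree_eq_zero hd] at hf
      exact absurd (P.eq_top_of_isUnit_mem hf (isUnit_C.mpr h0.isUnit)) hPrime.ne_top
    have hdivX : f.divX ≠ 0 := fun h => hd0 (by rw [← hd, divX_eq_zero_iff.mp h, natDegree_C])
    obtain ⟨t, ht, htie⟩ := exists_eval_mul_eq hdivX h0
    have hmem := P.mul_mem_left ((X + C t) ^ f.natDegree) hf
    rw [Tropical.X_add_C_pow_mul_eq t htie] at hmem
    rcases hPrime.mem_or_mem hmem with hlin | hq
    · exact ⟨t, ht, hPrime.mem_of_pow_mem _ hlin⟩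
    refine ih _ ?_ hq ?_ rfl
    · calc (f.divX.comp (X + C t)).natDegree
          ≤ f.divX.natDegree * (X + C t).natDegree := natDegree_comp_le
        _ < d := by
          rw [natDegree_X_add_C, mul_one, natDegree_divX_eq_natDegree_tsub_one, hd]; omega
    · rw [coeff_zero_eq_eval_zero, eval_comp, eval_add, eval_X, eval_C, zero_add]
      exact left_ne_zero_of_mul (htie ▸ h0)

theorem X_mem_of_forall_coeff_zero_eq_zero (hPrime : P.IsPrime) (hBot : P ≠ ⊥)
    (h : ∀ f ∈ P, f.coeff 0 = 0) : X ∈ P := by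
  obtain ⟨f, hf, hf0⟩ := Submodule.exists_mem_ne_zero_of_ne_bot hBot
  set n := f.natTrailingDegree
  have hn : f.coeff n ≠ 0 := trailingCoeff_nonzero_iff_nonzero.mpr hf0
  obtain ⟨g, hfg⟩ := X_pow_dvd_iff.mpr fun d (hd : d < n) =>
    coeff_eq_zero_of_lt_natTrailingDegree hd
  rw [hfg, coeff_X_pow_mul', if_pos le_rfl, Nat.sub_self] at hn
  rcases hPrime.mem_or_mem (hfg ▸ hf) with hX | hg
  · exact hPrime.mem_of_pow_mem n hX
  · exact absurd (h g hg) hn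

theorem top_mem_tropVa_iff (f : TropR[X]) : ⊤ ∈ tropVa f ↔ f.coeff 0 = 0 := by
  have hterm : ∀ i ≠ 0, trmVal f ⊤ i = 0 := fun i hi => by
    rw [trmVal, trop_top, zero_pow hi, mul_zero]
  have heval : f.eval (trop ⊤) = f.coeff 0 := by rw [trop_top, coeff_zero_eq_eval_zero]
  simp only [tropVa, Set.mem_ofPred_eq, heval]
  refine ⟨?_, Or.inl⟩
  rintro (h | ⟨i, j, hij, hi, hj⟩)
  · exact h
  · rcases eq_or_ne i 0 with rfl | hi0
    · rw [← hj, hterm j hij.symm]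
    · rw [← hi, hterm i hi0]

theorem mem_iff_top_mem_tropVa (hPrime : P.IsPrime) (hBot : P ≠ ⊥)
    (h : ∀ f ∈ P, f.coeff 0 = 0) (f : TropR[X]) : f ∈ P ↔ ⊤ ∈ tropVa f := by
  rw [top_mem_tropVa_iff]
  refine ⟨h f, fun hf0 => ?_⟩
  obtain ⟨g, rfl⟩ := X_dvd_iff.mpr hf0
  exact P.mul_mem_right g (X_mem_of_forall_coeff_zero_eq_zero hPrime hBot h)

end Prime

theorem prime_tropical_ideal_eq_Ja_general (P : Ideal (Polynomial TropR))
    (hPrime : P.IsPrime) (hTrop : IsTropicalIdealUV P) (hBot : P ≠ ⊥) :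
    ∃ a : WithTop ℝ, ∀ f, f ∈ P ↔ a ∈ tropVa f := by
  by_cases h : ∀ f ∈ P, f.coeff 0 = 0
  · exact ⟨⊤, mem_iff_top_mem_tropVa hPrime hBot h⟩
  · obtain ⟨f, hf, hf0⟩ := not_forall₂.mp h
    obtain ⟨t, ht, hlin⟩ := exists_X_add_C_mem hPrime hf hf0
    exact ⟨untrop t, mem_iff_untrop_mem_tropVa hTrop hPrime ht hlin⟩

/-- **Classification of tropical prime ideals of `R̄[x]`.**  Every prime ideal of
`R̄[x]` that is also a tropical ideal, and is neither the zero ideal `{∞}` nor the unit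
ideal, equals `J_a = {f : a ∈ V(f)}` for some `a ∈ ℝ ∪ {∞}`. -/
theorem prime_tropical_ideal_eq_Ja (P : Ideal (Polynomial TropR))
    (hPrime : P.IsPrime) (hTrop : IsTropicalIdealUV P) (hBot : P ≠ ⊥) (hTop : P ≠ ⊤) :
    ∃ a : WithTop ℝ, ∀ f, f ∈ P ↔ a ∈ tropVa f :=
  prime_tropical_ideal_eq_Ja_general P hPrime hTrop hBot
end

section
/- Let I be a homogeneous tropical ideal in R̄[x₀,…,xₙ], d ≥ 0, w ∈ ℝ^{n+1}, and suppose x^u is a monomial of degree d contained in in_w(I). If B is a basis of the initial matroid in_ŵ(M_d(I)) and f is the fundamental circuit H(B, x^u) of the valuated matroid M_d(I), then in_w(f) = x^u. -/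
/-- A valuated matroid of rank `r` on a finite ground set `E`, with values in `ℝ ∪ {∞}`:
a basis valuation function `p` on `binom(E,r)` (encoded as a function on all finsets which
is `∞` away from `r`-sets), not identically `∞`, satisfying the valuated basis exchange
axiom. -/
structure ValuatedMatroid (E : Type*) [DecidableEq E] [Fintype E] (r : ℕ) where
  p : Finset E → WithTop ℝ
  card_of_ne_top : ∀ B : Finset E, p B ≠ ⊤ → B.card = r
  exists_ne_top : ∃ B : Finset E, p B ≠ ⊤
  exchange : ∀ A B : Finset E, A.card = r → B.card = r → ∀ a ∈ A \ B,
    ∃ b ∈ B \ A,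
      p (insert b (A.erase a)) + p (insert a (B.erase b)) ≤ p A + p B

namespace ValuatedMatroid

variable {E : Type*} [DecidableEq E] [Fintype E] {r : ℕ}

/-- The shifted valuation `p_w(B) = p(B) − ∑_{e ∈ B} w_e`. -/
noncomputable def pw (M : ValuatedMatroid E r) (w : E → ℝ) (B : Finset E) : WithTop ℝ :=
  M.p B + ((-(∑ e ∈ B, w e) : ℝ) : WithTop ℝ)

/-- The minimum of `p_w` over all subsets of `E` (equivalently over all `r`-subsets,
since `p` is `∞` elsewhere). -/
noncomputable def minVal (M : ValuatedMatroid E r) (w : E → ℝ) : WithTop ℝ :=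
  (Finset.univ : Finset E).powerset.inf (M.pw w)

/-- `B` is a basis of the initial matroid `in_w(M)`: an `r`-subset minimizing `p_w`. -/
def IsInitBasis (M : ValuatedMatroid E r) (w : E → ℝ) (B : Finset E) : Prop :=
  B.card = r ∧ M.pw w B = M.minVal w

end ValuatedMatroid

namespace ValuatedMatroid

variable {E : Type*} [DecidableEq E] [Fintype E] {r : ℕ}

/-- The fundamental circuit `H(B, e)` of `e` over a basis `B` of the underlying matroid:
`H(B,e)_{e'} = p(B ∪ e − e') − p(B)`. -/
noncomputable def fundCircuit (M : ValuatedMatroid E r) (B : Finset E) (e : E) :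
    E → WithTop ℝ := fun e' =>
  M.p ((insert e B).erase e') + ((-(M.p B).untopD 0 : ℝ) : WithTop ℝ)

/-- A valuated circuit of `M`: a tropical scaling `λ ⊙ H(B, e)` of a fundamental
circuit over a basis `B` of the underlying matroid (`p(B) ≠ ∞`). -/
noncomputable def IsValuatedCircuit (M : ValuatedMatroid E r) (H : E → WithTop ℝ) : Prop :=
  ∃ (B : Finset E) (e : E) (lam : ℝ), M.p B ≠ ⊤ ∧ e ∉ B ∧
    ∀ e', H e' = (lam : WithTop ℝ) + M.fundCircuit B e e'

/-- `in_w(H)`: the set of elements at which `H_e + w_e` is minimal. -/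
def initSet (H : E → WithTop ℝ) (w : E → ℝ) : Set E :=
  {e | ∀ e', H e + (w e : WithTop ℝ) ≤ H e' + (w e' : WithTop ℝ)}

end ValuatedMatroid

/-! Write `S_e := (B₀ ∪ u₀) − e`. The value `f_e + ŵ_e` of the fundamental circuit at `e`
equals `p_ŵ(S_e) − p_ŵ(B₀) + ŵ_{u₀}` when `e ∈ B₀ ∪ u₀`, and is `∞` otherwise. At `e = u₀`
this is `ŵ_{u₀}`; for `e ∈ B₀` the `r`-set `S_e` contains the loop `u₀`, so it is not a basis
of the initial matroid and `p_ŵ(S_e) > p_ŵ(B₀)`. Hence the minimum is attained only at `u₀`. -/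

namespace ValuatedMatroid

theorem initSet_eq_singleton {E : Type*} [DecidableEq E] {H : E → WithTop ℝ} {w : E → ℝ} {e : E}
    (h : ∀ e' ≠ e, H e + (w e : WithTop ℝ) < H e' + (w e' : WithTop ℝ)) :
    initSet H w = {e} := by
  ext e'
  simp only [initSet, Set.mem_ofPred_eq, Set.mem_singleton_iff]
  constructor
  · intro hmin
    by_contra hne
    exact (hmin e).not_gt (h e' hne)
  · rintro rfl e''
    rcases eq_or_ne e'' e' with rfl | hne
    · exact le_rfl
    · exact (h e'' hne).le

variable {E : Type*} [DecidableEq E] [Fintype E] {r : ℕ}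

theorem p_eq_top_of_card_ne (M : ValuatedMatroid E r) {B : Finset E} (hB : B.card ≠ r) :
    M.p B = ⊤ := by
  by_contra h
  exact hB (M.card_of_ne_top B h)

theorem minVal_le_pw (M : ValuatedMatroid E r) (w : E → ℝ) (B : Finset E) :
    M.minVal w ≤ M.pw w B :=
  Finset.inf_le (Finset.mem_powerset.mpr (Finset.subset_univ B))

theorem minVal_ne_top (M : ValuatedMatroid E r) (w : E → ℝ) : M.minVal w ≠ ⊤ := by
  obtain ⟨B, hB⟩ := M.exists_ne_top
  exact ne_top_of_le_ne_top (by simp [pw, hB]) (M.minVal_le_pw w B)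

theorem IsInitBasis.pw_ne_top {M : ValuatedMatroid E r} {w : E → ℝ} {B : Finset E}
    (hB : M.IsInitBasis w B) : M.pw w B ≠ ⊤ :=
  hB.2 ▸ M.minVal_ne_top w

theorem IsInitBasis.p_ne_top {M : ValuatedMatroid E r} {w : E → ℝ} {B : Finset E}
    (hB : M.IsInitBasis w B) : M.p B ≠ ⊤ :=
  (WithTop.add_ne_top.mp hB.pw_ne_top).1

theorem IsInitBasis.pw_lt {M : ValuatedMatroid E r} {w : E → ℝ} {B S : Finset E}
    (hB : M.IsInitBasis w B) (hS : S.card = r) (hSB : ¬ M.IsInitBasis w S) :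
    M.pw w B < M.pw w S :=
  hB.2 ▸ (M.minVal_le_pw w S).lt_of_ne fun h => hSB ⟨hS, h.symm⟩

theorem fundCircuit_self (M : ValuatedMatroid E r) {B : Finset E} {e : E} (hB : M.p B ≠ ⊤)
    (he : e ∉ B) : M.fundCircuit B e e = 0 := by
  obtain ⟨c, hc⟩ := WithTop.ne_top_iff_exists.mp hB
  simp only [fundCircuit, Finset.erase_insert he, ← hc, WithTop.untopD_coe]
  norm_cast
  simp

theorem fundCircuit_eq_top (M : ValuatedMatroid E r) {B : Finset E} {e e' : E}
    (hB : B.card = r) (he : e ∉ B) (he' : e' ∉ insert e B) : M.fundCircuit B e e' = ⊤ := by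
  have hcard : (insert e B).card ≠ r := by
    rw [Finset.card_insert_of_notMem he, hB]
    exact r.succ_ne_self
  simp [fundCircuit, Finset.erase_eq_of_notMem he', M.p_eq_top_of_card_ne hcard]

theorem fundCircuit_add_add_pw (M : ValuatedMatroid E r) (w : E → ℝ) {B : Finset E} {e e' : E}
    (hB : M.p B ≠ ⊤) (he : e ∉ B) (he' : e' ∈ insert e B) :
    M.fundCircuit B e e' + (w e' : WithTop ℝ) + M.pw w B =
      M.pw w ((insert e B).erase e') + (w e : WithTop ℝ) := by
  obtain ⟨c, hc⟩ := WithTop.ne_top_iff_exists.mp hB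
  have hsum : ∑ x ∈ (insert e B).erase e', w x = w e + ∑ x ∈ B, w x - w e' := by
    rw [Finset.sum_erase_eq_sub he', Finset.sum_insert he]
  simp only [fundCircuit, pw, hsum, ← hc, WithTop.untopD_coe]
  induction M.p ((insert e B).erase e') using WithTop.recTopCoe with
  | top => simp
  | coe a =>
    norm_cast
    ring

end ValuatedMatroid

open ValuatedMatroid

/-- **The key step in the existence of finite tropical bases.**  Let `M = M_d(I)` be
the valuated matroid (on the degree-`d` monomials) of a homogeneous tropical ideal, let
`w` be the induced weight `ŵ` on the ground set, and let the monomial `u₀ = x^u` be a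
loop of the initial matroid `in_ŵ(M)` (i.e. `x^u ∈ in_w(I)`).  If `B₀` is a basis of
`in_ŵ(M)` and `f = H(B₀, u₀)` is the corresponding fundamental circuit of `M`, then
`in_w(f) = {x^u}`: the minimum of `f_e + ŵ_e` is attained exactly at `u₀`. -/
theorem initSet_fundCircuit_eq_singleton_of_loop {E : Type*} [DecidableEq E] [Fintype E]
    {r : ℕ} (M : ValuatedMatroid E r) (w : E → ℝ) (u₀ : E)
    (hloop : ∀ B : Finset E, M.IsInitBasis w B → u₀ ∉ B)
    (B₀ : Finset E) (hB₀ : M.IsInitBasis w B₀) :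
    initSet (M.fundCircuit B₀ u₀) w = {u₀} := by
  have hu₀ : u₀ ∉ B₀ := hloop B₀ hB₀
  refine initSet_eq_singleton fun e hne => ?_
  rw [M.fundCircuit_self hB₀.p_ne_top hu₀, zero_add]
  by_cases he : e ∈ B₀
  · have hS : M.pw w B₀ < M.pw w ((insert u₀ B₀).erase e) := by
      refine hB₀.pw_lt ?_ fun hS => hloop _ hS (Finset.mem_erase.mpr ⟨hne.symm, by simp⟩)
      rw [Finset.card_erase_of_mem (Finset.mem_insert_of_mem he),
        Finset.card_insert_of_notMem hu₀, hB₀.1, Nat.add_sub_cancel]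
    rw [← WithTop.add_lt_add_iff_right hB₀.pw_ne_top,
      M.fundCircuit_add_add_pw w hB₀.p_ne_top hu₀ (Finset.mem_insert_of_mem he), add_comm]
    exact WithTop.add_lt_add_right WithTop.coe_ne_top hS
  · rw [M.fundCircuit_eq_top hB₀.1 hu₀ (by simp [he, hne]), top_add]
    exact WithTop.coe_lt_top _
end
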